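/- In Γ^p, let i, j, k ∈ ℤ/pℤ be pairwise distinct and let ℓ ∈ ℤ/pℤ satisfy ℓ = (j−i)(i−k)/(2(j−k)) in ℤ/pℤ. Then σ_{i,ℓ} = σᵢ·[σᵢ^{1/2}·σⱼ^{(k−i)/(2(j−k))}, σ_k^{(i−j)/(2(j−k))}·σᵢ^{1/2}]^{-1}, where fractional exponents are computed in ℤ/pℤ (this is meaningful since all the σ's have order dividing p). -/

import Mathlib

/-- The commutator `[g, h] = g⁻¹ h⁻¹ g h`. -/
def pbra {G : Type*} [Group G] (g h : G) : G := g⁻¹ * h⁻¹ * g * h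

/-- The relators `α^p, τ^p` of `Γ = ⟨α, τ ∣ α^p, τ^p⟩`. -/
def CpCpRels (p : ℕ) : Set (FreeGroup (Fin 2)) :=
  {FreeGroup.of 0 ^ p, FreeGroup.of 1 ^ p}

/-- `Γ = ⟨α, τ ∣ α^p, τ^p⟩`, the free product of two cyclic groups of order `p`. -/
def Gam (p : ℕ) : Type := PresentedGroup (CpCpRels p)

instance (p : ℕ) : Group (Gam p) := by unfold Gam; infer_instance

/-- The generator `α` of `Γ`. -/
def αΓ (p : ℕ) : Gam p := PresentedGroup.of 0

/-- The generator `τ` of `Γ`. -/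
def τΓ (p : ℕ) : Gam p := PresentedGroup.of 1

/-- `αᵢ ∈ Γ^p`: the element whose `i`-th coordinate is `α`, others trivial. -/
def αt (p : ℕ) (i : ZMod p) : ZMod p → Gam p := Pi.mulSingle i (αΓ p)

/-- `τᵢ ∈ Γ^p`: the element whose `i`-th coordinate is `τ`, others trivial. -/
def τt (p : ℕ) (i : ZMod p) : ZMod p → Gam p := Pi.mulSingle i (τΓ p)

/-- `σᵢ = τᵢ·α_{i+1}·α_{i+2}²···α_{i+k}^k···α_{i-1}^{p-1} ∈ Γ^p`
(indices mod `p`): the element of `Γ^p` whose `i`-th coordinate is `τ` and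
whose `(i+k)`-th coordinate is `α^k` for `1 ≤ k ≤ p-1`. -/
def σg (p : ℕ) (i : ZMod p) : ZMod p → Gam p :=
  fun x => if x = i then τΓ p else αΓ p ^ (x - i).val

/-- `σ_{i,n} = σᵢ^{αᵢⁿ} = αᵢ⁻ⁿ·σᵢ·αᵢⁿ ∈ Γ^p`, with the exponent `n` read
modulo `p`. -/
def σgn (p : ℕ) (i n : ZMod p) : ZMod p → Gam p :=
  (αt p i ^ n.val)⁻¹ * σg p i * αt p i ^ n.val

/-!
The identity is checked coordinatewise in `Γ^p`, writing `a = 1/2`, `b = (k-i)/(2(j-k))`,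
`c = (i-j)/(2(j-k))`. At a coordinate `x ≠ i` the conjugation by `αᵢ^ℓ` is invisible and the
commutator vanishes: at `j` its second entry is `α^((j-k)c + (j-i)a) = 1`, at `k` its first entry is
`α^((k-i)a + (k-j)b) = 1`, and elsewhere all entries are powers of `α`. At coordinate `i` the two
entries are `t y` and `y⁻¹ t` with `t = τ^a`, `y = α^ℓ`, and `y⁻¹ t² y = t² [t y, y⁻¹ t]⁻¹` holds in
any group.
-/

section PowVal

variable {G : Type*} [Group G] {p : ℕ} {g : G}

lemma pow_val_one (hg : g ^ p = 1) : g ^ (1 : ZMod p).val = g := by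
  rw [ZMod.val_one_eq_one_mod, ← pow_eq_pow_mod _ hg, pow_one]

lemma pow_val_add [NeZero p] (hg : g ^ p = 1) (a b : ZMod p) :
    g ^ (a + b).val = g ^ a.val * g ^ b.val := by
  rw [← pow_add, ZMod.val_add, ← pow_eq_pow_mod _ hg]

lemma pow_val_mul (hg : g ^ p = 1) (a b : ZMod p) : g ^ (a * b).val = (g ^ a.val) ^ b.val := by
  rw [← pow_mul, ZMod.val_mul, ← pow_eq_pow_mod _ hg]

lemma pow_val_neg [NeZero p] (hg : g ^ p = 1) (a : ZMod p) : g ^ (-a).val = (g ^ a.val)⁻¹ := by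
  rw [eq_inv_iff_mul_eq_one, ← pow_val_add hg, neg_add_cancel, ZMod.val_zero, pow_zero]

end PowVal

section Commutator

variable {G : Type*} [Group G]

@[simp]
lemma pbra_one_left (g : G) : pbra 1 g = 1 := by simp [pbra]

@[simp]
lemma pbra_one_right (g : G) : pbra g 1 = 1 := by simp [pbra]

lemma pbra_apply {ι : Type*} {H : ι → Type*} [∀ x, Group (H x)] (g h : ∀ x, H x) (x : ι) :
    pbra g h x = pbra (g x) (h x) := rfl

lemma pbra_eq_one_of_commute {g h : G} (hgh : Commute g h) : pbra g h = 1 := by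
  rw [pbra, mul_assoc, hgh.eq]; group

lemma inv_mul_sq_mul (t x : G) : x⁻¹ * t ^ 2 * x = t ^ 2 * (pbra (t * x) (x⁻¹ * t))⁻¹ := by
  simp only [pbra]; group

end Commutator

lemma αΓ_pow_eq_one (p : ℕ) : αΓ p ^ p = 1 :=
  (map_pow (PresentedGroup.mk _) _ _).symm.trans (PresentedGroup.one_of_mem (Set.mem_insert _ _))

lemma τΓ_pow_eq_one (p : ℕ) : τΓ p ^ p = 1 :=
  (map_pow (PresentedGroup.mk _) _ _).symm.trans
    (PresentedGroup.one_of_mem (Set.mem_insert_of_mem _ rfl))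

section Coordinates

variable {p : ℕ} {i j k x : ZMod p}

@[simp]
lemma σg_apply_self (p : ℕ) (i : ZMod p) : σg p i i = τΓ p := if_pos rfl

lemma σg_apply_of_ne (h : x ≠ i) : σg p i x = αΓ p ^ (x - i).val := if_neg h

lemma σg_apply_pow_of_ne (h : x ≠ i) (a : ZMod p) :
    σg p i x ^ a.val = αΓ p ^ ((x - i) * a).val := by
  rw [σg_apply_of_ne h, pow_val_mul (αΓ_pow_eq_one p)]

lemma σgn_apply_self (i n : ZMod p) :
    σgn p i n i = (αΓ p ^ n.val)⁻¹ * τΓ p * αΓ p ^ n.val := by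
  simp [σgn, αt]

lemma σgn_apply_of_ne (h : x ≠ i) (n : ZMod p) : σgn p i n x = σg p i x := by
  simp [σgn, αt, Pi.mulSingle_eq_of_ne h]

lemma pbra_σg_apply_eq_one [NeZero p] (hxi : x ≠ i) (hjk : j ≠ k) {a b c : ZMod p}
    (hj : (j - k) * c + (j - i) * a = 0) (hk : (k - i) * a + (k - j) * b = 0) :
    pbra (σg p i x ^ a.val * σg p j x ^ b.val) (σg p k x ^ c.val * σg p i x ^ a.val) = 1 := by
  have hα := αΓ_pow_eq_one p
  rw [σg_apply_pow_of_ne hxi]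
  by_cases hxj : x = j
  · subst hxj
    rw [σg_apply_pow_of_ne hjk, ← pow_val_add hα, hj, ZMod.val_zero, pow_zero, pbra_one_right]
  by_cases hxk : x = k
  · subst hxk
    rw [σg_apply_pow_of_ne (Ne.symm hjk), ← pow_val_add hα, hk, ZMod.val_zero, pow_zero,
      pbra_one_left]
  rw [σg_apply_pow_of_ne hxj, σg_apply_pow_of_ne hxk]
  simp only [← pow_add]
  exact pbra_eq_one_of_commute ((Commute.refl _).pow_pow _ _)

lemma σgn_apply_self_eq_mul_inv_pbra [NeZero p] (hij : i ≠ j) (hik : i ≠ k) {a b c l : ZMod p}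
    (ha : a + a = 1) (hb : (i - j) * b = l) (hc : (i - k) * c = -l) :
    σgn p i l i = σg p i i *
      (pbra (σg p i i ^ a.val * σg p j i ^ b.val) (σg p k i ^ c.val * σg p i i ^ a.val))⁻¹ := by
  have hα := αΓ_pow_eq_one p
  have hτ : (τΓ p ^ a.val) ^ 2 = τΓ p := by
    rw [sq, ← pow_val_add (τΓ_pow_eq_one p), ha, pow_val_one (τΓ_pow_eq_one p)]
  rw [σgn_apply_self, σg_apply_self, σg_apply_pow_of_ne hij, σg_apply_pow_of_ne hik, hb, hc,
    pow_val_neg hα]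
  simpa only [hτ] using inv_mul_sq_mul (τΓ p ^ a.val) (αΓ p ^ l.val)

end Coordinates

/-- In `Γ^p`, let `i, j, k ∈ ℤ/pℤ` be pairwise distinct
and let `ℓ ∈ ℤ/pℤ` satisfy `ℓ = (j−i)(i−k)/(2(j−k))` in `ℤ/pℤ`.  Then
`σ_{i,ℓ} = σᵢ·[σᵢ^{1/2}·σⱼ^{(k−i)/(2(j−k))}, σ_k^{(i−j)/(2(j−k))}·σᵢ^{1/2}]⁻¹`,
the fractional exponents being computed in `ℤ/pℤ` (meaningful since all the
`σ`'s have order dividing `p`). -/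
theorem guptaSidki_sigma_il_identity
    (p : ℕ) (hp : p.Prime) (ho : Odd p)
    (i j k : ZMod p) (hij : i ≠ j) (hik : i ≠ k) (hjk : j ≠ k)
    (l : ZMod p) (hl : l = (j - i) * (i - k) * (2 * (j - k))⁻¹) :
    σgn p i l =
      σg p i *
        (pbra
          (σg p i ^ ((2 : ZMod p)⁻¹).val *
            σg p j ^ ((k - i) * (2 * (j - k))⁻¹).val)
          (σg p k ^ ((i - j) * (2 * (j - k))⁻¹).val *
            σg p i ^ ((2 : ZMod p)⁻¹).val))⁻¹ := by
  have : Fact p.Prime := ⟨hp⟩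
  have h2 : (2 : ZMod p) ≠ 0 :=
    Ring.two_ne_zero (by rw [ZMod.ringChar_zmod_n]; exact ho.ne_two_of_dvd_nat dvd_rfl)
  have hjk' : j - k ≠ 0 := sub_ne_zero_of_ne hjk
  funext x
  simp only [Pi.mul_apply, Pi.inv_apply, pbra_apply, Pi.pow_apply]
  by_cases hxi : x = i
  · subst hxi
    refine σgn_apply_self_eq_mul_inv_pbra hij hik ?_ ?_ ?_
    · rw [← two_mul, mul_inv_cancel₀ h2]
    · rw [hl]; ring
    · rw [hl]; ring
  · rw [σgn_apply_of_ne hxi, pbra_σg_apply_eq_one hxi hjk, inv_one, mul_one]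
    · field_simp; ring
    · field_simp; ring
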